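/- The variance V(n) := M2(n) − M(n)² converges as n → ∞ to (1/(1−e^{−1})²)·(e^{−1} + (1−e^{−1})·S₂ − S₁²), where S₁ = Σ_{k≥2} (e^{−1}/k!)·M(k) and S₂ = Σ_{k≥2} (e^{−1}/k!)·M2(k). (Numerically this limit equals 2.832554383….) -/

import Mathlib

/-!
Write `b n k` for the probability that exactly `k` of `n` processors become candidates. Both `M`
and `M2` solve a recursion `x n = a n + b n 0 · x n + ∑_{k=2}^n b n k · x k` with a forcing term
`a` (`1` for `M`, and `1 + 2 b n 0 M n + 2 ∑ b n k M k` for `M2`). Since `b n 1 ≥ e⁻¹`, strong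
induction shows that `|x| ≤ e · sup |a|`. Since `b n k ≤ 1/k!` and `b n k → e⁻¹/k!` (Poisson
limit), dominated convergence turns the sum into `S(x) = ∑_{k≥2} e⁻¹/k! · x k`, so whenever
`a n → α`, `x n → (α + S(x)) / (1 - e⁻¹)`. Substituting the limit of `M` into that of `M2`
gives the limit of `M2 n - (M n)²`.
-/

open Filter Topology Finset

namespace ItaiRodeh

open scoped Nat

noncomputable def candidateProb (n k : ℕ) : ℝ :=
  (n.choose k : ℝ) * (1 / (n : ℝ)) ^ k * (1 - 1 / (n : ℝ)) ^ (n - k)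

lemma one_sub_one_div_natCast_nonneg (n : ℕ) : 0 ≤ 1 - 1 / (n : ℝ) := by
  rw [one_div, sub_nonneg]
  exact Nat.cast_inv_le_one n

lemma candidateProb_nonneg (n k : ℕ) : 0 ≤ candidateProb n k := by
  have := one_sub_one_div_natCast_nonneg n
  unfold candidateProb
  positivity

lemma candidateProb_le_inv_factorial (n k : ℕ) : candidateProb n k ≤ 1 / k ! := by
  have hn : (n : ℝ) * (1 / n) ≤ 1 := by
    rcases n.eq_zero_or_pos with rfl | hn
    · simp
    · rw [mul_one_div_cancel (by positivity)]
  calc candidateProb n k ≤ (n.choose k : ℝ) * (1 / n) ^ k :=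
        mul_le_of_le_one_right (by positivity)
          (pow_le_one₀ (one_sub_one_div_natCast_nonneg n) (by simp))
    _ ≤ (n : ℝ) ^ k / k ! * (1 / n) ^ k := by gcongr; exact Nat.choose_le_pow_div k n
    _ = ((n : ℝ) * (1 / n)) ^ k / k ! := by ring
    _ ≤ 1 / k ! := by gcongr; exact pow_le_one₀ (by positivity) hn

lemma sum_range_candidateProb (n : ℕ) : ∑ k ∈ range (n + 1), candidateProb n k = 1 := by
  have h := add_pow (1 / (n : ℝ)) (1 - 1 / n) n
  rw [add_sub_cancel, one_pow] at h
  rw [h]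
  refine sum_congr rfl fun k _ => ?_
  unfold candidateProb
  ring

lemma candidateProb_zero_add_one_add_sum_Icc {n : ℕ} (hn : 1 ≤ n) :
    candidateProb n 0 + candidateProb n 1 + ∑ k ∈ Icc 2 n, candidateProb n k = 1 := by
  rw [← sum_range_candidateProb n, range_eq_Ico, sum_eq_sum_Ico_succ_bot (by omega),
    sum_eq_sum_Ico_succ_bot (by omega), Ico_add_one_right_eq_Icc, add_assoc]

lemma candidateProb_zero (n : ℕ) : candidateProb n 0 = (1 - 1 / (n : ℝ)) ^ n := by
  simp [candidateProb]

lemma candidateProb_one {n : ℕ} (hn : 1 ≤ n) :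
    candidateProb n 1 = (1 - 1 / (n : ℝ)) ^ (n - 1) := by
  have : (n : ℝ) ≠ 0 := by positivity
  simp [candidateProb, this]

lemma exp_neg_one_le_candidateProb_one {n : ℕ} (hn : 1 ≤ n) :
    Real.exp (-1) ≤ candidateProb n 1 := by
  obtain ⟨m, rfl⟩ := Nat.exists_eq_add_of_le' hn
  have hinv : candidateProb (m + 1) 1 * (1 + (m : ℝ)⁻¹) ^ m = 1 := by
    rcases m.eq_zero_or_pos with rfl | hm
    · simp [candidateProb]
    · have hprod : (1 - 1 / ((m + 1 : ℕ) : ℝ)) * (1 + (m : ℝ)⁻¹) = 1 := by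
        push_cast; field_simp; ring
      rw [candidateProb_one hn, Nat.add_sub_cancel, ← mul_pow, hprod, one_pow]
  rw [eq_inv_of_mul_eq_one_left hinv, Real.exp_neg]
  exact inv_anti₀ (by positivity) Real.one_add_inv_pow_le_exp

lemma tendsto_candidateProb (k : ℕ) :
    Tendsto (fun n => candidateProb n k) atTop (𝓝 (Real.exp (-1) / k !)) := by
  have h : Tendsto (fun n : ℕ => (n : ℝ) * (1 / n)) atTop (𝓝 1) :=
    tendsto_const_nhds.congr' <| by
      filter_upwards [eventually_ge_atTop 1] with n hn
      rw [mul_one_div_cancel (by positivity)]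
  simpa [candidateProb] using ProbabilityTheory.tendsto_choose_mul_pow_of_tendsto_mul_atTop k h

noncomputable def poissonTail (f : ℕ → ℝ) : ℝ :=
  ∑' k : ℕ, Real.exp (-1) / (Nat.factorial (k + 2)) * f (k + 2)

lemma sum_Icc_candidateProb_mul_eq_tsum (n : ℕ) (f : ℕ → ℝ) :
    ∑ k ∈ Icc 2 n, candidateProb n k * f k = ∑' j, candidateProb n (j + 2) * f (j + 2) := by
  rw [← Ico_add_one_right_eq_Icc, sum_Ico_eq_sum_range, tsum_eq_sum (s := range (n + 1 - 2))]
  · simp_rw [add_comm 2]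
  · intro j hj
    rw [mem_range, not_lt] at hj
    simp [candidateProb, Nat.choose_eq_zero_of_lt (by omega : n < j + 2)]

lemma tendsto_sum_Icc_candidateProb_mul {f : ℕ → ℝ} {C : ℝ} (hf : ∀ k, 2 ≤ k → |f k| ≤ C) :
    Tendsto (fun n => ∑ k ∈ Icc 2 n, candidateProb n k * f k) atTop (𝓝 (poissonTail f)) := by
  simp_rw [sum_Icc_candidateProb_mul_eq_tsum, poissonTail]
  refine tendsto_tsum_of_dominated_convergence (bound := fun j => C * (1 / (j + 2)!)) ?_
    (fun j => (tendsto_candidateProb (j + 2)).mul_const (f (j + 2))) (.of_forall fun n j => ?_)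
  · refine .mul_left C ((summable_nat_add_iff 2 (f := fun k => (1 : ℝ) / k !)).2 ?_)
    simpa using Real.summable_pow_div_factorial 1
  · rw [norm_mul, Real.norm_of_nonneg (candidateProb_nonneg _ _), mul_comm]
    have hC := hf (j + 2) (by omega)
    exact mul_le_mul hC (candidateProb_le_inv_factorial _ _) (candidateProb_nonneg _ _)
      ((abs_nonneg _).trans hC)

lemma candidateProb_zero_lt_one {n : ℕ} (hn : 1 ≤ n) : candidateProb n 0 < 1 := by
  have := candidateProb_zero_add_one_add_sum_Icc hn
  have := exp_neg_one_le_candidateProb_one hn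
  have := sum_nonneg fun k (_ : k ∈ Icc 2 n) => candidateProb_nonneg n k
  linarith [Real.exp_pos (-1)]

def RoundRecursion (a x : ℕ → ℝ) : Prop :=
  ∀ n, 2 ≤ n → x n = a n + candidateProb n 0 * x n + ∑ k ∈ Icc 2 n, candidateProb n k * x k

namespace RoundRecursion

variable {a x : ℕ → ℝ}

lemma abs_le (hx : RoundRecursion a x) {A : ℝ} (ha : ∀ n, 2 ≤ n → |a n| ≤ A) :
    ∀ n, 2 ≤ n → |x n| ≤ A * Real.exp 1 := by
  have hA : 0 ≤ A := (abs_nonneg _).trans (ha 2 le_rfl)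
  set C := A * Real.exp 1
  have hC : A ≤ C * Real.exp (-1) := by
    rw [mul_assoc, ← Real.exp_add]; simp
  intro n
  induction n using Nat.strong_induction_on with
  | _ n ih =>
  intro hn
  have htotal := candidateProb_zero_add_one_add_sum_Icc (n := n) (by omega)
  rw [Icc_eq_cons_Ico hn, sum_cons] at htotal
  have hrec := hx n hn
  rw [Icc_eq_cons_Ico hn, sum_cons] at hrec
  have hmid : |∑ k ∈ Ico 2 n, candidateProb n k * x k| ≤ C * ∑ k ∈ Ico 2 n, candidateProb n k := by
    rw [mul_sum]
    refine (abs_sum_le_sum_abs _ _).trans (sum_le_sum fun k hk => ?_)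
    rw [mem_Ico] at hk
    rw [abs_mul, abs_of_nonneg (candidateProb_nonneg n k), mul_comm C]
    exact mul_le_mul_of_nonneg_left (ih k hk.2 hk.1) (candidateProb_nonneg n k)
  have hb1 := exp_neg_one_le_candidateProb_one (n := n) (by omega)
  have hd : 0 < 1 - candidateProb n 0 - candidateProb n n := by
    linarith [Real.exp_pos (-1), sum_nonneg fun k (_ : k ∈ Ico 2 n) => candidateProb_nonneg n k]
  have hxd : |x n| * (1 - candidateProb n 0 - candidateProb n n) ≤
      A + C * ∑ k ∈ Ico 2 n, candidateProb n k := by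
    rw [← abs_of_pos hd, ← abs_mul,
      show x n * (1 - candidateProb n 0 - candidateProb n n) =
        a n + ∑ k ∈ Ico 2 n, candidateProb n k * x k by linarith]
    exact (abs_add_le _ _).trans (add_le_add (ha n hn) hmid)
  refine le_of_mul_le_mul_right (hxd.trans ?_) hd
  calc A + C * ∑ k ∈ Ico 2 n, candidateProb n k
      ≤ C * candidateProb n 1 + C * ∑ k ∈ Ico 2 n, candidateProb n k := by
        gcongr
        exact hC.trans (mul_le_mul_of_nonneg_left hb1 (by positivity))
    _ = C * (1 - candidateProb n 0 - candidateProb n n) := by linear_combination C * htotal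

lemma tendsto_sum (hx : RoundRecursion a x) {α : ℝ} (ha : Tendsto a atTop (𝓝 α)) :
    Tendsto (fun n => ∑ k ∈ Icc 2 n, candidateProb n k * x k) atTop (𝓝 (poissonTail x)) := by
  obtain ⟨A, hA⟩ := isBounded_iff_forall_norm_le.1 (Metric.isBounded_range_of_tendsto a ha)
  exact tendsto_sum_Icc_candidateProb_mul (hx.abs_le fun n _ => hA _ ⟨n, rfl⟩)

lemma tendsto (hx : RoundRecursion a x) {α : ℝ} (ha : Tendsto a atTop (𝓝 α)) :
    Tendsto x atTop (𝓝 ((α + poissonTail x) / (1 - Real.exp (-1)))) := by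
  have h0 : Tendsto (fun n => 1 - candidateProb n 0) atTop (𝓝 (1 - Real.exp (-1))) := by
    simpa using tendsto_const_nhds.sub (tendsto_candidateProb 0)
  refine ((ha.add (hx.tendsto_sum ha)).div h0 ?_).congr' ?_
  · exact (sub_pos.2 (Real.exp_lt_one_iff.2 (by norm_num))).ne'
  · filter_upwards [eventually_ge_atTop 2] with n hn
    have := candidateProb_zero_lt_one (n := n) (by omega)
    rw [Pi.div_apply, div_eq_iff (by linarith)]
    linarith [hx n hn]

end RoundRecursion

end ItaiRodeh

open ItaiRodeh in
theorem variance_tendsto_general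
    (M M2 : ℕ → ℝ)
    (hM : ∀ n : ℕ, 2 ≤ n →
      M n = 1 + (1 - 1/(n:ℝ))^n * M n +
        ∑ k ∈ Finset.Icc 2 n,
          (n.choose k : ℝ) * (1/(n:ℝ))^k * (1 - 1/(n:ℝ))^(n-k) * M k)
    (hM2 : ∀ n : ℕ, 2 ≤ n →
      M2 n = 1 + 2 * (1 - 1/(n:ℝ))^n * M n + (1 - 1/(n:ℝ))^n * M2 n +
        2 * ∑ k ∈ Finset.Icc 2 n,
          (n.choose k : ℝ) * (1/(n:ℝ))^k * (1 - 1/(n:ℝ))^(n-k) * M k +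
        ∑ k ∈ Finset.Icc 2 n,
          (n.choose k : ℝ) * (1/(n:ℝ))^k * (1 - 1/(n:ℝ))^(n-k) * M2 k) :
    Tendsto (fun n : ℕ => M2 n - (M n)^2) atTop
      (𝓝 (1 / (1 - Real.exp (-1))^2 *
        (Real.exp (-1) +
          (1 - Real.exp (-1)) *
            (∑' k : ℕ, Real.exp (-1) / (Nat.factorial (k+2)) * M2 (k+2)) -
          (∑' k : ℕ, Real.exp (-1) / (Nat.factorial (k+2)) * M (k+2))^2))) := by
  have hM' : RoundRecursion (fun _ => 1) M := fun n hn => by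
    rw [candidateProb_zero]; exact hM n hn
  have hM2' : RoundRecursion (fun n => 1 + 2 * candidateProb n 0 * M n +
      2 * ∑ k ∈ Icc 2 n, candidateProb n k * M k) M2 := fun n hn => by
    beta_reduce; rw [candidateProb_zero]; unfold candidateProb; linarith [hM2 n hn]
  have hq : Tendsto (fun n => candidateProb n 0) atTop (𝓝 (Real.exp (-1))) := by
    simpa using tendsto_candidateProb 0
  have hMlim := hM'.tendsto tendsto_const_nhds
  have hforcing := ((tendsto_const_nhds (x := (1 : ℝ))).add ((hq.const_mul 2).mul hMlim)).add
      ((hM'.tendsto_sum tendsto_const_nhds).const_mul 2)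
  convert (hM2'.tendsto hforcing).sub (hMlim.pow 2) using 2
  have hq1 : 1 - Real.exp (-1) ≠ 0 := (sub_pos.2 (Real.exp_lt_one_iff.2 (by norm_num))).ne'
  unfold poissonTail
  field_simp
  ring

/-- the variance V(n) = M2(n) − M(n)² converges to
    (1/(1−e⁻¹)²)·(e⁻¹ + (1−e⁻¹)·S₂ − S₁²). -/
theorem variance_tendsto
    (M M2 : ℕ → ℝ)
    (hM1 : M 1 = 0)
    (hM : ∀ n : ℕ, 2 ≤ n →
      M n = 1 + (1 - 1/(n:ℝ))^n * M n +
        ∑ k ∈ Finset.Icc 2 n,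
          (n.choose k : ℝ) * (1/(n:ℝ))^k * (1 - 1/(n:ℝ))^(n-k) * M k)
    (hM21 : M2 1 = 0)
    (hM2 : ∀ n : ℕ, 2 ≤ n →
      M2 n = 1 + 2 * (1 - 1/(n:ℝ))^n * M n + (1 - 1/(n:ℝ))^n * M2 n +
        2 * ∑ k ∈ Finset.Icc 2 n,
          (n.choose k : ℝ) * (1/(n:ℝ))^k * (1 - 1/(n:ℝ))^(n-k) * M k +
        ∑ k ∈ Finset.Icc 2 n,
          (n.choose k : ℝ) * (1/(n:ℝ))^k * (1 - 1/(n:ℝ))^(n-k) * M2 k) :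
    Tendsto (fun n : ℕ => M2 n - (M n)^2) atTop
      (𝓝 (1 / (1 - Real.exp (-1))^2 *
        (Real.exp (-1) +
          (1 - Real.exp (-1)) *
            (∑' k : ℕ, Real.exp (-1) / (Nat.factorial (k+2)) * M2 (k+2)) -
          (∑' k : ℕ, Real.exp (-1) / (Nat.factorial (k+2)) * M (k+2))^2))) :=
  variance_tendsto_general M M2 hM hM2
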